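/- Let n ≡ 1 (mod 4) be a positive integer and let a, b be indeterminates. Then, modulo b − q^n, one has Σ_{k=0}^{(n−1)/2} [6k+1] · (aq, q/a, q; q^2)_k·(q/b; q^4)_k · q^{k²+k}·b^k / ((aq^4, q^4/a, q^4; q^4)_k·(q^2 b; q^2)_k) ≡ [n] · (q, q^3; q^4)_{(n−1)/4} / (aq^4, q^4/a; q^4)_{(n−1)/4}. -/

import Mathlib

/-- The q-shifted factorial `(a; q)_k = (1-a)(1-aq)⋯(1-aq^{k-1})`. -/
noncomputable def qPoch {K : Type*} [Field K] (a q : K) (k : ℕ) : K :=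
  ∏ i ∈ Finset.range k, (1 - a * q ^ i)

/-- The q-integer `[m]_q = (1 - q^m)/(1 - q)`. -/
noncomputable def qInt {K : Type*} [Field K] (m : ℕ) (q : K) : K :=
  (1 - q ^ m) / (1 - q)

/-- `A ≡ B (mod P)`: written as a reduced fraction of polynomials, the numerator of
`A - B` is divisible by `P`. -/
def fracCongr {R K : Type*} [CommRing R] [Field K] [Algebra R K] (A B : K) (P : R) : Prop :=
  ∃ f g : R, IsRelPrime g P ∧ P ∣ f ∧
    A - B = algebraMap R K f / algebraMap R K g

/-- The field of rational functions in the three indeterminates `q, a, b`. -/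
noncomputable abbrev K3 : Type := FractionRing (MvPolynomial (Fin 3) ℚ)

noncomputable def q : K3 := algebraMap (MvPolynomial (Fin 3) ℚ) K3 (MvPolynomial.X 0)
noncomputable def a : K3 := algebraMap (MvPolynomial (Fin 3) ℚ) K3 (MvPolynomial.X 1)
noncomputable def b : K3 := algebraMap (MvPolynomial (Fin 3) ℚ) K3 (MvPolynomial.X 2)

/-- `Σ_{k=0}^{(n−1)/2} [6k+1]·(aq, q/a, q; q²)_k·(q/b; q⁴)_k·q^{k²+k}·b^k /
((aq⁴, q⁴/a, q⁴; q⁴)_k·(q²b; q²)_k)`. -/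
noncomputable def lhsSum (n : ℕ) : K3 :=
  ∑ k ∈ Finset.range ((n - 1) / 2 + 1),
    qInt (6 * k + 1) q *
      (qPoch (a * q) (q ^ 2) k * qPoch (q / a) (q ^ 2) k * qPoch q (q ^ 2) k *
        qPoch (q / b) (q ^ 4) k * q ^ (k ^ 2 + k) * b ^ k) /
      (qPoch (a * q ^ 4) (q ^ 4) k * qPoch (q ^ 4 / a) (q ^ 4) k *
        qPoch (q ^ 4) (q ^ 4) k * qPoch (q ^ 2 * b) (q ^ 2) k)

/-!
Put `n = 4m + 1`. At `b = q^n` the factor `(q/b; q⁴)_k = (q^{-4m}; q⁴)_k` vanishes for `k > m`, and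
the terminating sum equals the right-hand side exactly. This is proved by induction on `m` with a
Wilf–Zeilberger pair: the summand at `b = q^n` is `F n k = [6k+1] ∏_{i<k} ρ_n(q^i)` for an explicit
rational term ratio `ρ_n`, and with `G k = wzCert (q^k) · ∏_{i<k} ρ_{n+4}(q^i)` one has
`F (n+4) k - t_n F n k = G (k+1) - G k`, where `t_n` is the ratio of consecutive right-hand sides;
summing over `k` telescopes to `0`.

The congruence then comes from specialisation: the pairs `(f/g, f(q,a,q^n)/g(q,a,q^n))` with
`g(q,a,q^n) ≠ 0` form a subring of `K × K` (the graph of evaluation at `b = q^n` on the local ring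
at the prime `(b - q^n)`). Every denominator on both sides survives the specialisation, so
`(LHS - RHS, 0)` lies in this subring, which says that the numerator of `LHS - RHS` is divisible
by `b - q^n`.
-/

open Finset

section QSeries

variable {K : Type*} [Field K]

lemma qPoch_succ (x y : K) (k : ℕ) : qPoch x y (k + 1) = qPoch x y k * (1 - x * y ^ k) :=
  prod_range_succ _ _

lemma qPoch_ne_zero {x y : K} (hxy : ∀ i, 1 - x * y ^ i ≠ 0) (k : ℕ) : qPoch x y k ≠ 0 :=
  prod_ne_zero_iff.mpr fun i _ => hxy i

noncomputable def summand (q a b : K) (k : ℕ) : K :=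
  qInt (6 * k + 1) q *
      (qPoch (a * q) (q ^ 2) k * qPoch (q / a) (q ^ 2) k * qPoch q (q ^ 2) k *
        qPoch (q / b) (q ^ 4) k * q ^ (k ^ 2 + k) * b ^ k) /
    (qPoch (a * q ^ 4) (q ^ 4) k * qPoch (q ^ 4 / a) (q ^ 4) k *
      qPoch (q ^ 4) (q ^ 4) k * qPoch (q ^ 2 * b) (q ^ 2) k)

noncomputable def rhsProd (q a : K) (m : ℕ) : K :=
  qInt (4 * m + 1) q * (qPoch q (q ^ 4) m * qPoch (q ^ 3) (q ^ 4) m) /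
    (qPoch (a * q ^ 4) (q ^ 4) m * qPoch (q ^ 4 / a) (q ^ 4) m)

end QSeries

section Specialization

variable {R K F : Type*} [CommRing R] [Field K] [Algebra R K] [Field F] (φ : R →+* F)

def specializationSubring : Subring (K × F) where
  carrier := {p | ∃ f g : R, φ g ≠ 0 ∧ p.1 * algebraMap R K g = algebraMap R K f ∧ φ f = p.2 * φ g}
  mul_mem' := by
    rintro _ _ ⟨f, g, hg, hx, hy⟩ ⟨f', g', hg', hx', hy'⟩
    refine ⟨f * f', g * g', by simpa using mul_ne_zero hg hg', ?_, ?_⟩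
    · simp only [Prod.fst_mul, map_mul, ← hx, ← hx']; ring
    · simp only [Prod.snd_mul, map_mul, hy, hy']; ring
  one_mem' := ⟨1, 1, by simp, by simp, by simp⟩
  add_mem' := by
    rintro _ _ ⟨f, g, hg, hx, hy⟩ ⟨f', g', hg', hx', hy'⟩
    refine ⟨f * g' + f' * g, g * g', by simpa using mul_ne_zero hg hg', ?_, ?_⟩
    · simp only [Prod.fst_add, map_add, map_mul, ← hx, ← hx']; ring
    · simp only [Prod.snd_add, map_add, map_mul, hy, hy']; ring
  zero_mem' := ⟨0, 1, by simp, by simp, by simp⟩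
  neg_mem' := by
    rintro _ ⟨f, g, hg, hx, hy⟩
    exact ⟨-f, g, hg, by simp [← hx], by simp [hy]⟩

def SpecializesTo (x : K) (y : F) : Prop := (x, y) ∈ specializationSubring φ

variable {φ}

lemma specializesTo_algebraMap (f : R) : SpecializesTo φ (algebraMap R K f) (φ f) :=
  ⟨f, 1, by simp, by simp, by simp⟩

lemma specializesTo_one : SpecializesTo φ (1 : K) (1 : F) :=
  one_mem _

namespace SpecializesTo

variable {x x' : K} {y y' : F}

lemma mul (h : SpecializesTo φ x y) (h' : SpecializesTo φ x' y') :
    SpecializesTo φ (x * x') (y * y') :=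
  mul_mem h h'

lemma sub (h : SpecializesTo φ x y) (h' : SpecializesTo φ x' y') :
    SpecializesTo φ (x - x') (y - y') :=
  sub_mem h h'

lemma pow (h : SpecializesTo φ x y) (k : ℕ) : SpecializesTo φ (x ^ k) (y ^ k) :=
  pow_mem h k

lemma sum {ι : Type*} {s : Finset ι} {x : ι → K} {y : ι → F}
    (h : ∀ i ∈ s, SpecializesTo φ (x i) (y i)) :
    SpecializesTo φ (∑ i ∈ s, x i) (∑ i ∈ s, y i) := by
  rw [SpecializesTo, prod_mk_sum]
  exact sum_mem h

lemma inv [IsFractionRing R K] (h : SpecializesTo φ x y) (hy : y ≠ 0) :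
    SpecializesTo φ x⁻¹ y⁻¹ := by
  obtain ⟨f, g, hg, hx, hfy⟩ := h
  have hf : algebraMap R K f ≠ 0 := by
    refine (map_ne_zero_iff _ (IsFractionRing.injective R K)).mpr fun hf0 => ?_
    rw [hf0, map_zero, eq_comm] at hfy
    exact mul_ne_zero hy hg hfy
  have hx0 : x ≠ 0 := by rintro rfl; exact hf (by rw [← hx, zero_mul])
  refine ⟨g, f, fun hf0 => mul_ne_zero hy hg (hfy ▸ hf0), ?_, ?_⟩
  · rw [← hx, ← mul_assoc, inv_mul_cancel₀ hx0, one_mul]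
  · rw [hfy, ← mul_assoc, inv_mul_cancel₀ hy, one_mul]

lemma div [IsFractionRing R K] (h : SpecializesTo φ x y) (h' : SpecializesTo φ x' y')
    (hy' : y' ≠ 0) :
    SpecializesTo φ (x / x') (y / y') := by
  simpa only [div_eq_mul_inv] using h.mul (h'.inv hy')

lemma qPoch (h : SpecializesTo φ x y) (h' : SpecializesTo φ x' y') (k : ℕ) :
    SpecializesTo φ (_root_.qPoch x x' k) (_root_.qPoch y y' k) := by
  have hprod : (_root_.qPoch x x' k, _root_.qPoch y y' k) =
      ∏ i ∈ range k, (1 - (x, y) * (x', y') ^ i) := by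
    ext <;> simp [_root_.qPoch, Prod.fst_prod, Prod.snd_prod]
  rw [SpecializesTo, hprod]
  exact prod_mem fun i _ => sub_mem (one_mem _) (mul_mem h (pow_mem h' i))

lemma qInt [IsFractionRing R K] (h : SpecializesTo φ x y) (hy : 1 - y ≠ 0) (m : ℕ) :
    SpecializesTo φ (_root_.qInt m x) (_root_.qInt m y) :=
  (specializesTo_one.sub (h.pow m)).div (specializesTo_one.sub h) hy

variable [IsFractionRing R K] {q a b : K} {q' a' b' : F}

lemma summand (hq : SpecializesTo φ q q') (ha : SpecializesTo φ a a')
    (hb : SpecializesTo φ b b') (hq' : 1 - q' ≠ 0) (ha' : a' ≠ 0) (hb' : b' ≠ 0) (k : ℕ)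
    (hden : _root_.qPoch (a' * q' ^ 4) (q' ^ 4) k * _root_.qPoch (q' ^ 4 / a') (q' ^ 4) k *
      _root_.qPoch (q' ^ 4) (q' ^ 4) k * _root_.qPoch (q' ^ 2 * b') (q' ^ 2) k ≠ 0) :
    SpecializesTo φ (_root_.summand q a b k) (_root_.summand q' a' b' k) := by
  have hq2 := hq.pow 2
  have hq4 := hq.pow 4
  refine ((hq.qInt hq' _).mul
    (((((((ha.mul hq).qPoch hq2 k).mul ((hq.div ha ha').qPoch hq2 k)).mul (hq.qPoch hq2 k)).mul
      ((hq.div hb hb').qPoch hq4 k)).mul (hq.pow _)).mul (hb.pow k))).div ?_ hden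
  exact ((((ha.mul hq4).qPoch hq4 k).mul ((hq4.div ha ha').qPoch hq4 k)).mul
    (hq4.qPoch hq4 k)).mul ((hq2.mul hb).qPoch hq2 k)

lemma rhsProd (hq : SpecializesTo φ q q') (ha : SpecializesTo φ a a') (hq' : 1 - q' ≠ 0)
    (ha' : a' ≠ 0) (m : ℕ)
    (hden : _root_.qPoch (a' * q' ^ 4) (q' ^ 4) m * _root_.qPoch (q' ^ 4 / a') (q' ^ 4) m ≠ 0) :
    SpecializesTo φ (_root_.rhsProd q a m) (_root_.rhsProd q' a' m) := by
  have hq4 := hq.pow 4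
  exact ((hq.qInt hq' _).mul ((hq.qPoch hq4 m).mul ((hq.pow 3).qPoch hq4 m))).div
    (((ha.mul hq4).qPoch hq4 m).mul ((hq4.div ha ha').qPoch hq4 m)) hden

end SpecializesTo

lemma isRelPrime_of_map_ne_zero [IsDomain R] {P g : R} (hP : P ≠ 0)
    (hker : ∀ f, φ f = 0 ↔ P ∣ f) (hg : φ g ≠ 0) : IsRelPrime g P := by
  intro d hdg ⟨e, hde⟩
  have hzero : φ d * φ e = 0 := by rw [← map_mul, ← hde, hker]
  rcases mul_eq_zero.mp hzero with hd | he
  · exact absurd ((hker g).mpr (((hker d).mp hd).trans hdg)) hg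
  · obtain ⟨w, rfl⟩ := (hker e).mp he
    refine IsUnit.of_mul_eq_one w (mul_left_cancel₀ hP ?_)
    linear_combination -hde

lemma fracCongr_of_specializesTo_zero [IsDomain R] [IsFractionRing R K] {P : R}
    (hP : P ≠ 0) (hker : ∀ f, φ f = 0 ↔ P ∣ f) {A B : K}
    (h : SpecializesTo φ (A - B) 0) : fracCongr A B P := by
  obtain ⟨f, g, hg, hAB, hf⟩ := h
  have hg' : algebraMap R K g ≠ 0 :=
    (map_ne_zero_iff _ (IsFractionRing.injective R K)).mpr fun h0 => hg (by rw [h0, map_zero])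
  refine ⟨f, g, isRelPrime_of_map_ne_zero hP hker hg, (hker f).mp (by rw [hf, zero_mul]), ?_⟩
  rw [eq_div_iff hg']
  exact hAB

end Specialization

section TerminatingSum

variable {K : Type*} [Field K]

noncomputable def summandRatioA (q a x : K) : K :=
  (1 - q * x ^ 2 * a) * (a - q * x ^ 2) * (1 - q * x ^ 2) * (q ^ 2 * x ^ 2) /
    ((1 - q ^ 4 * x ^ 4 * a) * (a - q ^ 4 * x ^ 4) * (1 - q ^ 4 * x ^ 4))

noncomputable def summandRatioB (q b x : K) : K :=
  (b - q * x ^ 4) / (1 - q ^ 2 * x ^ 2 * b)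

noncomputable def summandProd (q a b : K) (k : ℕ) : K :=
  ∏ i ∈ range k, summandRatioA q a (q ^ i) * summandRatioB q b (q ^ i)

lemma prod_pow_two_mul_add_two (q : K) (k : ℕ) :
    ∏ i ∈ range k, q ^ (2 * i + 2) = q ^ (k ^ 2 + k) := by
  induction k with
  | zero => simp
  | succ k ih => rw [prod_range_succ, ih, ← pow_add]; ring_nf

variable {q a b : K}

lemma summand_factor_eq_summandRatio (ha : a ≠ 0) (hb : b ≠ 0) (i : ℕ) :
    (1 - a * q * (q ^ 2) ^ i) * (1 - q / a * (q ^ 2) ^ i) * (1 - q * (q ^ 2) ^ i) *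
          (1 - q / b * (q ^ 4) ^ i) * q ^ (2 * i + 2) * b /
        ((1 - a * q ^ 4 * (q ^ 4) ^ i) * (1 - q ^ 4 / a * (q ^ 4) ^ i) *
          (1 - q ^ 4 * (q ^ 4) ^ i) * (1 - q ^ 2 * b * (q ^ 2) ^ i)) =
      summandRatioA q a (q ^ i) * summandRatioB q b (q ^ i) := by
  have hA (c : K) : (1 - c / a) * a = a - c := by rw [sub_mul, div_mul_cancel₀ _ ha, one_mul]
  have hB (c : K) : (1 - c / b) * b = b - c := by rw [sub_mul, div_mul_cancel₀ _ hb, one_mul]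
  rw [← mul_div_mul_right _ _ ha, summandRatioA, summandRatioB, div_mul_div_comm]
  congr 1
  · calc _ = (1 - a * q * (q ^ 2) ^ i) * ((1 - q * (q ^ 2) ^ i / a) * a) * (1 - q * (q ^ 2) ^ i) *
          ((1 - q * (q ^ 4) ^ i / b) * b) * q ^ (2 * i + 2) := by ring
      _ = _ := by rw [hA, hB]; ring
  · calc _ = (1 - a * q ^ 4 * (q ^ 4) ^ i) * ((1 - q ^ 4 * (q ^ 4) ^ i / a) * a) *
          (1 - q ^ 4 * (q ^ 4) ^ i) * (1 - q ^ 2 * b * (q ^ 2) ^ i) := by ring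
      _ = _ := by rw [hA]; ring

lemma summand_eq_qInt_mul_summandProd (ha : a ≠ 0) (hb : b ≠ 0) (k : ℕ) :
    summand q a b k = qInt (6 * k + 1) q * summandProd q a b k := by
  rw [summand, mul_div_assoc, summandProd, ← prod_pow_two_mul_add_two,
    show b ^ k = ∏ _i ∈ range k, b by simp]
  simp only [qPoch, ← prod_mul_distrib, ← prod_div_distrib]
  exact congrArg _ (prod_congr rfl fun i _ => summand_factor_eq_summandRatio ha hb i)

noncomputable def shiftRatio (q N x : K) : K :=
  (q ^ 3 * N - x ^ 4) * (1 - q ^ 2 * x ^ 2 * N) * (1 - q ^ 4 * x ^ 2 * N) /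
    ((q ^ 3 * N - 1) * x ^ 4 * (1 - q ^ 2 * N) * (1 - q ^ 4 * N))

noncomputable def rhsRatio (q a N : K) : K :=
  (1 - q ^ 4 * N) * (1 - q ^ 2 * N) * a / ((1 - q ^ 3 * N * a) * (a - q ^ 3 * N))

noncomputable def wzDen (q a N x : K) : K :=
  (1 - q ^ 3 * N) * (1 - q ^ 3 * N * a) * (a - q ^ 3 * N) * x ^ 4

-- A q-Zeilberger certificate for the shift `N ↦ q⁴ N`.
noncomputable def wzCert (q a N x : K) : K :=
  -(q ^ 3 * N * (1 - x ^ 4) * (1 - x ^ 4 * a) * (a - x ^ 4) * (1 - q ^ 4 * x ^ 2 * N)) /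
    ((1 - q) * wzDen q a N x)

lemma rhsRatio_mul_shiftRatio {N x : K} (hx : x ≠ 0) (h2 : 1 - q ^ 2 * N ≠ 0)
    (h3 : 1 - q ^ 3 * N ≠ 0) (h4 : 1 - q ^ 4 * N ≠ 0) (h5 : 1 - q ^ 3 * N * a ≠ 0)
    (h6 : a - q ^ 3 * N ≠ 0) :
    rhsRatio q a N * shiftRatio q N x =
      -(a * (q ^ 3 * N - x ^ 4) * (1 - q ^ 2 * x ^ 2 * N) * (1 - q ^ 4 * x ^ 2 * N)) /
        wzDen q a N x := by
  have h3' : q ^ 3 * N - 1 ≠ 0 := by rw [← neg_sub]; exact neg_ne_zero.mpr h3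
  rw [rhsRatio, shiftRatio, wzDen, div_mul_div_comm, div_eq_div_iff (by simp [*]) (by simp [*])]
  ring

lemma wzCert_mul_summandRatio {N x : K} (hq : q ≠ 0) (hx : x ≠ 0) (h1 : 1 - q ≠ 0)
    (h3 : 1 - q ^ 3 * N ≠ 0) (h5 : 1 - q ^ 3 * N * a ≠ 0) (h6 : a - q ^ 3 * N ≠ 0)
    (h7 : 1 - q ^ 4 * x ^ 4 * a ≠ 0) (h8 : a - q ^ 4 * x ^ 4 ≠ 0) (h9 : 1 - q ^ 4 * x ^ 4 ≠ 0)
    (h10 : 1 - q ^ 2 * x ^ 2 * (q ^ 4 * N) ≠ 0) :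
    wzCert q a N (q * x) * (summandRatioA q a x * summandRatioB q (q ^ 4 * N) x) =
      -(q ^ 2 * N * x ^ 2 * (1 - q * x ^ 2 * a) * (a - q * x ^ 2) * (1 - q * x ^ 2) *
        (q ^ 3 * N - x ^ 4)) / ((1 - q) * wzDen q a N x) := by
  rw [wzCert, summandRatioA, summandRatioB, wzDen, wzDen, div_mul_div_comm, div_mul_div_comm,
    div_eq_div_iff (by simp [*]) (by simp [*])]
  ring

lemma wzCert_identity {N x : K} (hq : q ≠ 0) (hx : x ≠ 0)
    (h1 : 1 - q ≠ 0) (h2 : 1 - q ^ 2 * N ≠ 0) (h3 : 1 - q ^ 3 * N ≠ 0) (h4 : 1 - q ^ 4 * N ≠ 0)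
    (h5 : 1 - q ^ 3 * N * a ≠ 0) (h6 : a - q ^ 3 * N ≠ 0) (h7 : 1 - q ^ 4 * x ^ 4 * a ≠ 0)
    (h8 : a - q ^ 4 * x ^ 4 ≠ 0) (h9 : 1 - q ^ 4 * x ^ 4 ≠ 0)
    (h10 : 1 - q ^ 2 * x ^ 2 * (q ^ 4 * N) ≠ 0) :
    (1 - q * x ^ 6) / (1 - q) * (1 - rhsRatio q a N * shiftRatio q N x) + wzCert q a N x =
      wzCert q a N (q * x) * (summandRatioA q a x * summandRatioB q (q ^ 4 * N) x) := by
  have hD : wzDen q a N x ≠ 0 := by rw [wzDen]; simp [*]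
  rw [rhsRatio_mul_shiftRatio hx h2 h3 h4 h5 h6,
    wzCert_mul_summandRatio hq hx h1 h3 h5 h6 h7 h8 h9 h10, wzCert]
  have key : (1 - q * x ^ 6) * (wzDen q a N x +
        a * (q ^ 3 * N - x ^ 4) * (1 - q ^ 2 * x ^ 2 * N) * (1 - q ^ 4 * x ^ 2 * N)) -
      q ^ 3 * N * (1 - x ^ 4) * (1 - x ^ 4 * a) * (a - x ^ 4) * (1 - q ^ 4 * x ^ 2 * N) =
      -(q ^ 2 * N * x ^ 2 * (1 - q * x ^ 2 * a) * (a - q * x ^ 2) * (1 - q * x ^ 2) *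
        (q ^ 3 * N - x ^ 4)) := by
    rw [wzDen]; ring
  generalize wzDen q a N x = D at *
  rw [one_sub_div hD, div_mul_div_comm, div_add_div _ _ (mul_ne_zero h1 hD) (mul_ne_zero h1 hD),
    div_eq_div_iff (by simp [*]) (by simp [*])]
  linear_combination (1 - q) ^ 2 * D ^ 2 * key

lemma wzCert_one (q a N : K) : wzCert q a N 1 = 0 := by
  simp [wzCert]

lemma shiftRatio_one {N : K} (h2 : 1 - q ^ 2 * N ≠ 0) (h3 : 1 - q ^ 3 * N ≠ 0)
    (h4 : 1 - q ^ 4 * N ≠ 0) : shiftRatio q N 1 = 1 := by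
  have h3' : q ^ 3 * N - 1 ≠ 0 := by rw [← neg_sub]; exact neg_ne_zero.mpr h3
  rw [shiftRatio, div_eq_one_iff_eq (by simp [*])]
  ring

lemma shiftRatio_mul_summandRatioB {N x : K} (hq : q ≠ 0) (hx : x ≠ 0) (h2 : 1 - q ^ 2 * N ≠ 0)
    (h3 : 1 - q ^ 3 * N ≠ 0) (h4 : 1 - q ^ 4 * N ≠ 0) (h5 : 1 - q ^ 2 * x ^ 2 * N ≠ 0)
    (h6 : 1 - q ^ 2 * x ^ 2 * (q ^ 4 * N) ≠ 0) :
    shiftRatio q N x * summandRatioB q N x =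
      shiftRatio q N (q * x) * summandRatioB q (q ^ 4 * N) x := by
  have h3' : q ^ 3 * N - 1 ≠ 0 := by rw [← neg_sub]; exact neg_ne_zero.mpr h3
  rw [shiftRatio, shiftRatio, summandRatioB, summandRatioB, div_mul_div_comm, div_mul_div_comm,
    div_eq_div_iff (by simp [*]) (by simp [*])]
  ring

structure QGeneric (q a : K) : Prop where
  q_ne_zero : q ≠ 0
  a_ne_zero : a ≠ 0
  one_sub_pow_ne_zero : ∀ j, j ≠ 0 → 1 - q ^ j ≠ 0
  one_sub_mul_pow_ne_zero : ∀ j, 1 - a * q ^ j ≠ 0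
  sub_pow_ne_zero : ∀ j, a - q ^ j ≠ 0

namespace QGeneric

lemma one_sub_ne_zero (h : QGeneric q a) {y : K} {j : ℕ} (hj : j ≠ 0) (hy : y = q ^ j) :
    1 - y ≠ 0 :=
  hy ▸ h.one_sub_pow_ne_zero j hj

lemma one_sub_mul_ne_zero (h : QGeneric q a) {y : K} {j : ℕ} (hy : y = q ^ j) : 1 - y * a ≠ 0 := by
  rw [hy, mul_comm]; exact h.one_sub_mul_pow_ne_zero j

lemma sub_ne_zero (h : QGeneric q a) {y : K} {j : ℕ} (hy : y = q ^ j) : a - y ≠ 0 :=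
  hy ▸ h.sub_pow_ne_zero j

lemma qPoch_aq4_ne_zero (h : QGeneric q a) (k : ℕ) : qPoch (a * q ^ 4) (q ^ 4) k ≠ 0 :=
  qPoch_ne_zero (fun i => by
    rw [show a * q ^ 4 * (q ^ 4) ^ i = q ^ (4 * i + 4) * a by ring]
    exact h.one_sub_mul_ne_zero rfl) k

lemma qPoch_q4a_ne_zero (h : QGeneric q a) (k : ℕ) : qPoch (q ^ 4 / a) (q ^ 4) k ≠ 0 :=
  qPoch_ne_zero (fun i => by
    rw [show q ^ 4 / a * (q ^ 4) ^ i = q ^ (4 * i + 4) / a by ring, one_sub_div h.a_ne_zero]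
    exact div_ne_zero (h.sub_pow_ne_zero _) h.a_ne_zero) k

lemma summand_den_ne_zero (h : QGeneric q a) (n k : ℕ) :
    qPoch (a * q ^ 4) (q ^ 4) k * qPoch (q ^ 4 / a) (q ^ 4) k * qPoch (q ^ 4) (q ^ 4) k *
      qPoch (q ^ 2 * q ^ n) (q ^ 2) k ≠ 0 :=
  mul_ne_zero (mul_ne_zero (mul_ne_zero (h.qPoch_aq4_ne_zero k) (h.qPoch_q4a_ne_zero k))
    (qPoch_ne_zero (fun i => h.one_sub_ne_zero (j := 4 * i + 4) (by omega) (by ring)) k))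
    (qPoch_ne_zero (fun i => h.one_sub_ne_zero (j := 2 * i + n + 2) (by omega) (by ring)) k)

end QGeneric

lemma summandProd_succ (q a b : K) (k : ℕ) :
    summandProd q a b (k + 1) =
      summandProd q a b k * (summandRatioA q a (q ^ k) * summandRatioB q b (q ^ k)) :=
  prod_range_succ _ _

lemma summandProd_eq_shiftRatio_mul (h : QGeneric q a) (n k : ℕ) :
    summandProd q a (q ^ n) k = shiftRatio q (q ^ n) (q ^ k) * summandProd q a (q ^ (n + 4)) k := by
  have h2 : 1 - q ^ 2 * q ^ n ≠ 0 := h.one_sub_ne_zero (j := n + 2) (by omega) (by ring)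
  have h3 : 1 - q ^ 3 * q ^ n ≠ 0 := h.one_sub_ne_zero (j := n + 3) (by omega) (by ring)
  have h4 : 1 - q ^ 4 * q ^ n ≠ 0 := h.one_sub_ne_zero (j := n + 4) (by omega) (by ring)
  induction k with
  | zero => simp [summandProd, shiftRatio_one h2 h3 h4]
  | succ k ih =>
    have key := shiftRatio_mul_summandRatioB h.q_ne_zero (pow_ne_zero k h.q_ne_zero) h2 h3 h4
      (h.one_sub_ne_zero (j := 2 * k + n + 2) (by omega) (by ring))
      (h.one_sub_ne_zero (j := 2 * k + n + 6) (by omega) (by ring))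
    rw [← pow_succ', ← pow_add, add_comm 4] at key
    rw [summandProd_succ, summandProd_succ, ih]
    linear_combination summandProd q a (q ^ (n + 4)) k * summandRatioA q a (q ^ k) * key

lemma summand_telescope (h : QGeneric q a) (n k : ℕ) :
    summand q a (q ^ (n + 4)) k - rhsRatio q a (q ^ n) * summand q a (q ^ n) k =
      wzCert q a (q ^ n) (q ^ (k + 1)) * summandProd q a (q ^ (n + 4)) (k + 1) -
        wzCert q a (q ^ n) (q ^ k) * summandProd q a (q ^ (n + 4)) k := by
  have hq := h.q_ne_zero
  have key := wzCert_identity (a := a) (N := q ^ n) (x := q ^ k) hq (pow_ne_zero k hq)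
    (h.one_sub_ne_zero (j := 1) one_ne_zero (pow_one q).symm)
    (h.one_sub_ne_zero (j := n + 2) (by omega) (by ring))
    (h.one_sub_ne_zero (j := n + 3) (by omega) (by ring))
    (h.one_sub_ne_zero (j := n + 4) (by omega) (by ring))
    (h.one_sub_mul_ne_zero (j := n + 3) (by ring))
    (h.sub_ne_zero (j := n + 3) (by ring))
    (h.one_sub_mul_ne_zero (j := 4 * k + 4) (by ring))
    (h.sub_ne_zero (j := 4 * k + 4) (by ring))
    (h.one_sub_ne_zero (j := 4 * k + 4) (by omega) (by ring))
    (h.one_sub_ne_zero (j := 2 * k + n + 6) (by omega) (by ring))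
  rw [← pow_succ', ← pow_add, add_comm 4] at key
  rw [summand_eq_qInt_mul_summandProd h.a_ne_zero (pow_ne_zero _ hq),
    summand_eq_qInt_mul_summandProd h.a_ne_zero (pow_ne_zero _ hq),
    summandProd_eq_shiftRatio_mul h n k, summandProd_succ,
    show qInt (6 * k + 1) q = (1 - q * (q ^ k) ^ 6) / (1 - q) by rw [qInt]; ring]
  linear_combination summandProd q a (q ^ (n + 4)) k * key

lemma summandProd_eq_zero {m k : ℕ} (hk : m < k) : summandProd q a (q ^ (4 * m + 1)) k = 0 :=
  prod_eq_zero (mem_range.mpr hk) (by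
    rw [summandRatioB, show q ^ (4 * m + 1) - q * (q ^ m) ^ 4 = 0 by ring, zero_div, mul_zero])

lemma summand_eq_zero (h : QGeneric q a) {m k : ℕ} (hk : m < k) :
    summand q a (q ^ (4 * m + 1)) k = 0 := by
  rw [summand_eq_qInt_mul_summandProd h.a_ne_zero (pow_ne_zero _ h.q_ne_zero),
    summandProd_eq_zero hk, mul_zero]

lemma rhsProd_succ (h : QGeneric q a) (m : ℕ) :
    rhsProd q a (m + 1) = rhsRatio q a (q ^ (4 * m + 1)) * rhsProd q a m := by
  have d1 := h.qPoch_aq4_ne_zero m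
  have d2 := h.qPoch_q4a_ne_zero m
  have h1 : 1 - q ≠ 0 := h.one_sub_ne_zero (j := 1) one_ne_zero (pow_one q).symm
  have h5 : 1 - q ^ 3 * q ^ (4 * m + 1) * a ≠ 0 := h.one_sub_mul_ne_zero (j := 4 * m + 4) (by ring)
  have h6 : a - q ^ 3 * q ^ (4 * m + 1) ≠ 0 := h.sub_ne_zero (j := 4 * m + 4) (by ring)
  rw [rhsProd, rhsProd, rhsRatio, qPoch_succ, qPoch_succ, qPoch_succ, qPoch_succ, qInt, qInt,
    show q ^ 4 / a * (q ^ 4) ^ m = q ^ 3 * q ^ (4 * m + 1) / a by ring, one_sub_div h.a_ne_zero,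
    show a * q ^ 4 * (q ^ 4) ^ m = q ^ 3 * q ^ (4 * m + 1) * a by ring]
  generalize qPoch (a * q ^ 4) (q ^ 4) m = D1 at *
  generalize qPoch (q ^ 4 / a) (q ^ 4) m = D2 at *
  field_simp
  ring

lemma sum_range_succ_summand_eq_rhsProd (h : QGeneric q a) (m : ℕ) :
    ∑ k ∈ range (m + 1), summand q a (q ^ (4 * m + 1)) k = rhsProd q a m := by
  induction m with
  | zero => simp [summand, rhsProd, qPoch]
  | succ m ih =>
    have hvan : summandProd q a (q ^ (4 * m + 1 + 4)) (m + 2) = 0 := by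
      rw [show 4 * m + 1 + 4 = 4 * (m + 1) + 1 by ring]; exact summandProd_eq_zero (by omega)
    have htel : ∑ k ∈ range (m + 2), (summand q a (q ^ (4 * m + 1 + 4)) k -
        rhsRatio q a (q ^ (4 * m + 1)) * summand q a (q ^ (4 * m + 1)) k) = 0 := by
      rw [sum_congr rfl fun k _ => summand_telescope h (4 * m + 1) k, sum_range_sub
        (fun k => wzCert q a (q ^ (4 * m + 1)) (q ^ k) * summandProd q a (q ^ (4 * m + 1 + 4)) k),
        hvan, pow_zero, wzCert_one]
      ring
    rw [sum_sub_distrib, ← mul_sum, sum_range_succ (summand q a (q ^ (4 * m + 1))),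
      summand_eq_zero h (lt_add_one m), add_zero, ih] at htel
    rw [rhsProd_succ h, show 4 * (m + 1) + 1 = 4 * m + 1 + 4 by ring]
    linear_combination htel

lemma sum_summand_eq_rhsProd (h : QGeneric q a) (m : ℕ) :
    ∑ k ∈ range (2 * m + 1), summand q a (q ^ (4 * m + 1)) k = rhsProd q a m := by
  rw [← sum_range_succ_summand_eq_rhsProd h m]
  refine (sum_subset (range_subset_range.mpr (by omega)) fun k _ hk => ?_).symm
  exact summand_eq_zero h (by simpa using hk)

end TerminatingSum

section RationalFunctions

open MvPolynomial

noncomputable def substBPow (n : ℕ) : MvPolynomial (Fin 3) ℚ →ₐ[ℚ] MvPolynomial (Fin 3) ℚ :=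
  aeval ![X 0, X 1, X 0 ^ n]

lemma dvd_sub_substBPow (n : ℕ) (f : MvPolynomial (Fin 3) ℚ) :
    X 2 - X 0 ^ n ∣ f - substBPow n f := by
  induction f using MvPolynomial.induction_on with
  | C r => simp [substBPow]
  | add f g hf hg => rw [map_add, add_sub_add_comm]; exact dvd_add hf hg
  | mul_X f i hf =>
    rw [map_mul, show f * X i - substBPow n f * substBPow n (X i) =
      (f - substBPow n f) * X i + substBPow n f * (X i - substBPow n (X i)) by ring]
    refine dvd_add (dvd_mul_of_dvd_left hf _) (dvd_mul_of_dvd_right ?_ _)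
    fin_cases i <;> simp [substBPow]

lemma substBPow_eq_zero_iff (n : ℕ) (f : MvPolynomial (Fin 3) ℚ) :
    substBPow n f = 0 ↔ X 2 - X 0 ^ n ∣ f := by
  refine ⟨fun h => by simpa [h] using dvd_sub_substBPow n f, ?_⟩
  rintro ⟨g, rfl⟩
  simp [substBPow]

lemma X_two_sub_X_zero_pow_ne_zero (n : ℕ) : (X 2 - X 0 ^ n : MvPolynomial (Fin 3) ℚ) ≠ 0 := by
  intro h
  have h' := congrArg (eval ![1, 1, 2]) h
  norm_num [Matrix.cons_val_two] at h'

noncomputable def specializeB (n : ℕ) : MvPolynomial (Fin 3) ℚ →+* K3 :=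
  (algebraMap _ K3).comp (substBPow n).toRingHom

lemma specializeB_eq_zero_iff (n : ℕ) (f : MvPolynomial (Fin 3) ℚ) :
    specializeB n f = 0 ↔ X 2 - X 0 ^ n ∣ f := by
  rw [specializeB, RingHom.comp_apply, map_eq_zero_iff _ (IsFractionRing.injective _ K3)]
  exact substBPow_eq_zero_iff n f

lemma specializesTo_specializeB (n : ℕ) (i : Fin 3) :
    SpecializesTo (specializeB n) (algebraMap (MvPolynomial (Fin 3) ℚ) K3 (X i))
      (algebraMap (MvPolynomial (Fin 3) ℚ) K3 (![X 0, X 1, X 0 ^ n] i)) := by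
  simpa [specializeB, substBPow] using specializesTo_algebraMap (K := K3) (φ := specializeB n) (X i)

lemma algebraMap_ne_zero_of_eval_ne_zero {f : MvPolynomial (Fin 3) ℚ} (v : Fin 3 → ℚ)
    (h : eval v f ≠ 0) : algebraMap _ K3 f ≠ 0 :=
  (map_ne_zero_iff _ (IsFractionRing.injective _ K3)).mpr fun hf => h (by simp [hf])

lemma qGeneric_q_a : QGeneric q a where
  q_ne_zero := algebraMap_ne_zero_of_eval_ne_zero ![1, 1, 1] (by simp)
  a_ne_zero := algebraMap_ne_zero_of_eval_ne_zero ![1, 1, 1] (by simp)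
  one_sub_pow_ne_zero j hj := by
    have h2 : (1 : ℚ) - 2 ^ j ≠ 0 := sub_ne_zero.mpr (one_lt_pow₀ one_lt_two hj).ne
    have := algebraMap_ne_zero_of_eval_ne_zero (f := 1 - X 0 ^ j) ![2, 1, 1] (by simpa using h2)
    rwa [map_sub, map_one, map_pow] at this
  one_sub_mul_pow_ne_zero j := by
    have := algebraMap_ne_zero_of_eval_ne_zero (f := 1 - X 1 * X 0 ^ j) ![1, 2, 1] (by norm_num)
    rwa [map_sub, map_one, map_mul, map_pow] at this
  sub_pow_ne_zero j := by
    have := algebraMap_ne_zero_of_eval_ne_zero (f := X 1 - X 0 ^ j) ![1, 2, 1] (by norm_num)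
    rwa [map_sub, map_pow] at this

lemma specializesTo_lhsSum (m : ℕ) :
    SpecializesTo (specializeB (4 * m + 1)) (lhsSum (4 * m + 1))
      (∑ k ∈ range (2 * m + 1), summand q a (q ^ (4 * m + 1)) k) := by
  have h := qGeneric_q_a
  have hb : SpecializesTo (specializeB (4 * m + 1)) b (q ^ (4 * m + 1)) := by
    simpa [q, b] using specializesTo_specializeB (4 * m + 1) 2
  rw [lhsSum, show (4 * m + 1 - 1) / 2 + 1 = 2 * m + 1 by omega]
  exact SpecializesTo.sum fun k _ =>
    (specializesTo_specializeB _ 0).summand (specializesTo_specializeB _ 1) hb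
      (h.one_sub_ne_zero one_ne_zero (pow_one q).symm) h.a_ne_zero (pow_ne_zero _ h.q_ne_zero) k
      (h.summand_den_ne_zero _ k)

lemma specializesTo_rhsProd (n m : ℕ) :
    SpecializesTo (specializeB n) (rhsProd q a m) (rhsProd q a m) :=
  have h := qGeneric_q_a
  (specializesTo_specializeB _ 0).rhsProd (specializesTo_specializeB _ 1)
    (h.one_sub_ne_zero one_ne_zero (pow_one q).symm) h.a_ne_zero m
    (mul_ne_zero (h.qPoch_aq4_ne_zero m) (h.qPoch_q4a_ne_zero m))

end RationalFunctions

theorem stmt12_general (n : ℕ) (hmod : n % 4 = 1) :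
    fracCongr
      (lhsSum n)
      (qInt n q *
        (qPoch q (q ^ 4) ((n - 1) / 4) * qPoch (q ^ 3) (q ^ 4) ((n - 1) / 4)) /
        (qPoch (a * q ^ 4) (q ^ 4) ((n - 1) / 4) * qPoch (q ^ 4 / a) (q ^ 4) ((n - 1) / 4)))
      ((MvPolynomial.X 2 - MvPolynomial.X 0 ^ n : MvPolynomial (Fin 3) ℚ)) := by
  obtain ⟨m, rfl⟩ : ∃ m, n = 4 * m + 1 := ⟨n / 4, by omega⟩
  rw [show (4 * m + 1 - 1) / 4 = m by omega]
  refine fracCongr_of_specializesTo_zero (X_two_sub_X_zero_pow_ne_zero _)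
    (specializeB_eq_zero_iff _) ?_
  have hdiff := (specializesTo_lhsSum m).sub (specializesTo_rhsProd _ m)
  rwa [sum_summand_eq_rhsProd qGeneric_q_a m, sub_self] at hdiff

theorem stmt12 (n : ℕ) (hn : 0 < n) (hmod : n % 4 = 1) :
    fracCongr
      (lhsSum n)
      (qInt n q *
        (qPoch q (q ^ 4) ((n - 1) / 4) * qPoch (q ^ 3) (q ^ 4) ((n - 1) / 4)) /
        (qPoch (a * q ^ 4) (q ^ 4) ((n - 1) / 4) * qPoch (q ^ 4 / a) (q ^ 4) ((n - 1) / 4)))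
      ((MvPolynomial.X 2 - MvPolynomial.X 0 ^ n : MvPolynomial (Fin 3) ℚ)) :=
  stmt12_general n hmod
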